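/- Suppose m ≥ 2 and D = n·s + d·f − Σ_{i=1}^m r_i·e_i ∈ Λ_m satisfies ⟨D, D⟩ = −2, ⟨D, K⟩ = 0, ⟨D, f⟩ ≥ 0, and ⟨D, e_m⟩ ≥ 0. Then there exists an even simple root σ with ⟨D, σ⟩ < 0. (This is the key lattice step showing that every −2-curve on a rational surface can be moved to a simple root by reflections in ineffective simple roots.) -/

import Mathlib

/-- The basis vector `s` of the lattice `Λ_m = ℤ^{m+2}` (coordinate 0). -/
def sV (m : ℕ) : Fin (m + 2) → ℤ := fun i => if (i : ℕ) = 0 then 1 else 0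

/-- The basis vector `f` of the lattice `Λ_m = ℤ^{m+2}` (coordinate 1). -/
def fV (m : ℕ) : Fin (m + 2) → ℤ := fun i => if (i : ℕ) = 1 then 1 else 0

/-- The basis vector `e_j` (for `1 ≤ j ≤ m`) of the lattice `Λ_m = ℤ^{m+2}`
(coordinate `j+1`). -/
def eV (m j : ℕ) : Fin (m + 2) → ℤ := fun i => if (i : ℕ) = j + 1 then 1 else 0

/-- The even intersection form on `Λ_m`: `⟨s,s⟩ = 0`, `⟨s,f⟩ = 1`, `⟨f,f⟩ = 0`,
`⟨s,e_i⟩ = ⟨f,e_i⟩ = 0`, `⟨e_i,e_j⟩ = −δ_{ij}`. -/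
def evenForm (m : ℕ) (u v : Fin (m + 2) → ℤ) : ℤ :=
  u 0 * v 1 + u 1 * v 0 - ∑ i : Fin (m + 2), if 2 ≤ (i : ℕ) then u i * v i else 0

/-- The canonical class `K = −2s − 2f + Σ_{i=1}^m e_i` (even case). -/
def evenK (m : ℕ) : Fin (m + 2) → ℤ :=
  (-2 : ℤ) • sV m + (-2 : ℤ) • fV m + ∑ j ∈ Finset.Icc 1 m, eV m j

/-- The even simple roots: `σ_0 = s − f`, `σ_1 = f − e_1 − e_2`,
`σ_k = e_{k−1} − e_k` for `2 ≤ k ≤ m`. -/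
def evenRoot (m k : ℕ) : Fin (m + 2) → ℤ :=
  if k = 0 then sV m - fV m
  else if k = 1 then fV m - eV m 1 - eV m 2
  else eV m (k - 1) - eV m k

/-!
Write `n = ⟨D, f⟩`, `d = ⟨D, s⟩` and `r_j = ⟨D, e_j⟩`, so that `⟨D, D⟩ = 2nd - Σ r_j²` and
`⟨D, K⟩ = Σ r_j - 2n - 2d`. If `D` met every simple root nonnegatively we would have
`d ≥ n ≥ r_1 + r_2` and `r_1 ≥ r_2 ≥ ⋯ ≥ r_m ≥ 0`. Then `r_j² ≤ r_2 r_j` for `j ≥ 2`, and together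
with `Σ r_j = 2n + 2d` this gives `Σ r_j² ≤ 2nd`, contradicting `⟨D, D⟩ = -2`.
-/

open Finset

theorem sum_sq_le_of_antitoneOn {R : Type*} [CommRing R] [LinearOrder R] [IsStrictOrderedRing R]
    {m : ℕ} (hm : 2 ≤ m) {n d : R} {r : ℕ → R} (hr : AntitoneOn r (Set.Icc 1 m))
    (hrm : 0 ≤ r m) (hnd : n ≤ d) (h12 : r 1 + r 2 ≤ n)
    (hsum : ∑ j ∈ Icc 1 m, r j = 2 * n + 2 * d) :
    ∑ j ∈ Icc 1 m, r j ^ 2 ≤ 2 * n * d := by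
  have hIcc : Icc 1 m = insert 1 (Icc 2 m) := (insert_Icc_add_one_left_eq_Icc (by omega)).symm
  have hmem : ∀ {j}, j ∈ Icc 2 m → j ∈ Set.Icc 1 m := fun hj => by
    simp only [mem_Icc] at hj; exact ⟨by omega, hj.2⟩
  have h2mem : 2 ∈ Icc 2 m := mem_Icc.2 ⟨le_rfl, hm⟩
  have hr12 : r 2 ≤ r 1 := hr ⟨le_rfl, by omega⟩ (hmem h2mem) (by omega)
  have hr2 : 0 ≤ r 2 := hrm.trans (hr (hmem h2mem) ⟨by omega, le_rfl⟩ hm)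
  have htail : ∑ j ∈ Icc 2 m, r j ^ 2 ≤ r 2 * ∑ j ∈ Icc 2 m, r j := by
    rw [mul_sum]
    refine sum_le_sum fun j hj => ?_
    have hj0 : 0 ≤ r j := hrm.trans (hr (hmem hj) ⟨by have := (mem_Icc.1 hj).1; omega, le_rfl⟩ (mem_Icc.1 hj).2)
    have hj2 : r j ≤ r 2 := hr (hmem h2mem) (hmem hj) (mem_Icc.1 hj).1
    nlinarith
  rw [hIcc, sum_insert (by simp)] at hsum ⊢
  -- with `a = r 1`, `b = r 2`, `x = n - a - b`, `y = d - a - b`: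
  -- `2nd - a² - b (2n + 2d - a) = 2xy + 2ax + 2ay + (a - b)(a + 2b)`
  nlinarith [mul_nonneg (sub_nonneg.2 h12) (sub_nonneg.2 (h12.trans hnd)),
    mul_nonneg (hr2.trans hr12) (sub_nonneg.2 h12),
    mul_nonneg (hr2.trans hr12) (sub_nonneg.2 (h12.trans hnd)),
    mul_nonneg (sub_nonneg.2 hr12) (by linarith : (0 : R) ≤ r 1 + 2 * r 2)]

theorem sum_ite_two_le_eq_sum_Icc {M : Type*} [AddCommMonoid M] (m : ℕ) (g : ℕ → M) :
    (∑ i : Fin (m + 2), if 2 ≤ (i : ℕ) then g i else 0) = ∑ j ∈ Icc 1 m, g (j + 1) := by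
  rw [Fin.sum_univ_eq_sum_range (fun k => if 2 ≤ k then g k else 0), sum_range_succ',
    sum_range_succ']
  simp only [le_add_iff_nonneg_left, zero_le, ↓reduceIte, zero_add, Nat.not_ofNat_le_one,
    add_zero, nonpos_iff_eq_zero, OfNat.ofNat_ne_zero]
  rw [range_eq_Ico, sum_Ico_add' (fun k => g (k + 1)), zero_add, Ico_add_one_right_eq_Icc]

def evenFormRight (m : ℕ) (u : Fin (m + 2) → ℤ) : (Fin (m + 2) → ℤ) →+ ℤ :=
  AddMonoidHom.mk' (evenForm m u) fun v w => by
    simp only [evenForm, Pi.add_apply, mul_add, ite_add_zero, sum_add_distrib]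
    ring

theorem evenFormRight_apply (m : ℕ) (u v : Fin (m + 2) → ℤ) :
    evenFormRight m u v = evenForm m u v := rfl

theorem evenForm_sub_right (m : ℕ) (u v w : Fin (m + 2) → ℤ) :
    evenForm m u (v - w) = evenForm m u v - evenForm m u w :=
  map_sub (evenFormRight m u) v w

theorem evenForm_sV (m : ℕ) (u : Fin (m + 2) → ℤ) : evenForm m u (sV m) = u 1 := by
  simp only [evenForm, sV]
  rw [sum_eq_zero fun i _ => by split_ifs <;> first | rfl | omega]
  simp

theorem evenForm_fV (m : ℕ) (u : Fin (m + 2) → ℤ) : evenForm m u (fV m) = u 0 := by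
  simp only [evenForm, fV]
  rw [sum_eq_zero fun i _ => by split_ifs <;> first | rfl | omega]
  simp

theorem evenForm_eV (m : ℕ) (u : Fin (m + 2) → ℤ) {j : ℕ} (hj : 1 ≤ j) (hjm : j ≤ m) :
    evenForm m u (eV m j) = -u ⟨j + 1, by omega⟩ := by
  simp only [evenForm, eV]
  rw [sum_eq_single (⟨j + 1, by omega⟩ : Fin (m + 2))]
  · simp [hj, show j ≠ 0 by omega]
  · intro i _ hi
    simp [Fin.ext_iff.not.1 hi]
  · simp

theorem evenForm_self (m : ℕ) (u : Fin (m + 2) → ℤ) :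
    evenForm m u u = 2 * u 0 * u 1 - ∑ j ∈ Icc 1 m, evenForm m u (eV m j) ^ 2 := by
  let g : ℕ → ℤ := fun k => if h : k < m + 2 then u ⟨k, h⟩ ^ 2 else 0
  have hg : ∀ i : Fin (m + 2), u i * u i = g i := fun i => by simp [g, sq]
  rw [evenForm, Fintype.sum_congr _ _ fun i => by rw [hg], sum_ite_two_le_eq_sum_Icc,
    sum_congr rfl fun j hj => ?_]
  · ring
  · simp only [mem_Icc] at hj
    simp [g, evenForm_eV m u hj.1 hj.2, show j + 1 < m + 2 by omega]

theorem evenForm_evenK (m : ℕ) (u : Fin (m + 2) → ℤ) :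
    evenForm m u (evenK m) = -2 * u 1 - 2 * u 0 + ∑ j ∈ Icc 1 m, evenForm m u (eV m j) := by
  change evenFormRight m u (evenK m) = _
  simp only [evenK, map_add, map_zsmul, map_sum, evenFormRight_apply, evenForm_sV, evenForm_fV,
    smul_eq_mul]
  ring

theorem evenForm_evenRoot_zero (m : ℕ) (u : Fin (m + 2) → ℤ) :
    evenForm m u (evenRoot m 0) = u 1 - u 0 := by
  simp [evenRoot, evenForm_sub_right, evenForm_sV, evenForm_fV]

theorem evenForm_evenRoot_one (m : ℕ) (u : Fin (m + 2) → ℤ) :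
    evenForm m u (evenRoot m 1) = u 0 - evenForm m u (eV m 1) - evenForm m u (eV m 2) := by
  simp [evenRoot, evenForm_sub_right, evenForm_fV]

theorem evenForm_evenRoot_of_two_le (m : ℕ) (u : Fin (m + 2) → ℤ) {k : ℕ} (hk : 2 ≤ k) :
    evenForm m u (evenRoot m k) = evenForm m u (eV m (k - 1)) - evenForm m u (eV m k) := by
  simp [evenRoot, show k ≠ 0 by omega, show k ≠ 1 by omega, evenForm_sub_right]

theorem neg_two_class_meets_some_root_negatively_general (m : ℕ) (hm : 2 ≤ m)
    (D : Fin (m + 2) → ℤ)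
    (h2 : evenForm m D D = -2) (hK : evenForm m D (evenK m) = 0)
    (hem : 0 ≤ evenForm m D (eV m m)) :
    ∃ k, k ≤ m ∧ evenForm m D (evenRoot m k) < 0 := by
  by_contra! hroots
  set r : ℕ → ℤ := fun j => evenForm m D (eV m j)
  have hr : AntitoneOn r (Set.Icc 1 m) := by
    refine antitoneOn_of_succ_le Set.ordConnected_Icc fun k _ hk hk' => ?_
    have := hroots (k + 1) hk'.2
    rw [evenForm_evenRoot_of_two_le m D (Nat.succ_le_succ hk.1)] at this
    simpa [r] using this
  have hnd : D 0 ≤ D 1 := by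
    simpa [evenForm_evenRoot_zero] using hroots 0 (by omega)
  have h12 : r 1 + r 2 ≤ D 0 := by
    linarith [evenForm_evenRoot_one m D ▸ hroots 1 (by omega)]
  have hsum : ∑ j ∈ Icc 1 m, r j = 2 * D 0 + 2 * D 1 := by
    linarith [evenForm_evenK m D]
  have hsq := sum_sq_le_of_antitoneOn hm hr hem hnd h12 hsum
  linarith [evenForm_self m D]

/-- For `m ≥ 2`, if `D ∈ Λ_m` satisfies `⟨D, D⟩ = −2`, `⟨D, K⟩ = 0`, `⟨D, f⟩ ≥ 0` and
`⟨D, e_m⟩ ≥ 0`, then there exists an even simple root `σ` with `⟨D, σ⟩ < 0`.  (This is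
the key lattice step showing that every `−2`-curve on a rational surface can be moved to
a simple root by reflections in ineffective simple roots.) -/
theorem neg_two_class_meets_some_root_negatively (m : ℕ) (hm : 2 ≤ m)
    (D : Fin (m + 2) → ℤ)
    (h2 : evenForm m D D = -2) (hK : evenForm m D (evenK m) = 0)
    (hf : 0 ≤ evenForm m D (fV m)) (hem : 0 ≤ evenForm m D (eV m m)) :
    ∃ k, k ≤ m ∧ evenForm m D (evenRoot m k) < 0 :=
  neg_two_class_meets_some_root_negatively_general m hm D h2 hK hem
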